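/- arXiv:2003.07800 — 2 statements merged into one kernel-verified Lean document; each statement's English description precedes it below -/
import Mathlib

section
/- If there is a homomorphism h from a Boolean conjunctive query p to a (possibly infinite) database D, then there is a contraction p_c of p (obtained from p by identifying variables) such that D satisfies p_c and every homomorphism from p_c to D is injective. -/
/-- A database / Boolean conjunctive query (as a set of atoms over its variables). -/
structure DB (A R C : Type) where
  un : Set (A × C)
  bin : Set (R × C × C)

def isHom {A R C C' : Type} (D1 : DB A R C) (D2 : DB A R C') (h : C → C') : Prop :=
  (∀ a c, (a, c) ∈ D1.un → (a, h c) ∈ D2.un) ∧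
  (∀ r c d, (r, c, d) ∈ D1.bin → (r, h c, h d) ∈ D2.bin)

/-- The image of a database/CQ under a map of its constants/variables.
For a surjection `σ`, `mapDB σ p` is the contraction of `p` induced by `σ`. -/
def mapDB {A R C C' : Type} (f : C → C') (D : DB A R C) : DB A R C' where
  un := {p | ∃ a c, (a, c) ∈ D.un ∧ p = (a, f c)}
  bin := {p | ∃ r c d, (r, c, d) ∈ D.bin ∧ p = (r, f c, f d)}

/-!
Among all homomorphisms `h : p → D` choose one whose image is as small as possible (possible
since `p` has finitely many variables), and contract `p` along `h`, i.e. onto `Set.range h`.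
A homomorphism `g` from this contraction to `D` composes with the contraction to a homomorphism
`p → D` with image `Set.range g`; by minimality this image is as large as the domain of `g`,
so `g` is injective.
-/

lemma isHom_mapDB {A R V C C' : Type} (p : DB A R V) (D : DB A R C') (f : V → C) (g : C → C') :
    isHom (mapDB f p) D g ↔ isHom p D (g ∘ f) := by
  constructor
  · rintro ⟨hun, hbin⟩
    exact ⟨fun a c hc => hun a (f c) ⟨a, c, hc, rfl⟩,
      fun r c d hcd => hbin r (f c) (f d) ⟨r, c, d, hcd, rfl⟩⟩
  · rintro ⟨hun, hbin⟩
    constructor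
    · rintro a c ⟨a', c', hc', heq⟩
      obtain ⟨rfl, rfl⟩ := Prod.mk.inj heq
      exact hun _ _ hc'
    · rintro r c d ⟨r', c', d', hcd', heq⟩
      simp only [Prod.mk.injEq] at heq
      obtain ⟨rfl, rfl, rfl⟩ := heq
      exact hbin _ _ _ hcd'

lemma Function.injective_of_card_le_card_range {α β : Type*} [Finite α] {g : α → β}
    (hg : Nat.card α ≤ Nat.card (Set.range g)) : Function.Injective g :=
  Set.rangeFactorization_injective.mp
    (Set.rangeFactorization_surjective.bijective_of_nat_card_le hg).injective

/-- If a Boolean CQ `p` maps homomorphically to a (possibly infinite) database `D`,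
then some contraction `p_c` of `p` satisfies: `D ⊨ p_c` and every homomorphism from
`p_c` to `D` is injective. -/
theorem stmt2 {A R V C : Type} [Finite V] (p : DB A R V) (D : DB A R C)
    (hp : ∃ h : V → C, isHom p D h) :
    ∃ (V' : Type) (σ : V → V'), Function.Surjective σ ∧
      (∃ g : V' → C, isHom (mapDB σ p) D g) ∧
      (∀ g : V' → C, isHom (mapDB σ p) D g → Function.Injective g) := by
  obtain ⟨h, hh, hmin⟩ :=
    exists_minimalFor_of_wellFoundedLT (isHom p D) (fun h => Nat.card (Set.range h)) hp
  have hσ := Set.rangeFactorization_surjective (f := h)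
  refine ⟨Set.range h, Set.rangeFactorization h, hσ,
    ⟨Subtype.val, (isHom_mapDB p D _ _).2 hh⟩, fun g hg => ?_⟩
  have hrange : Set.range (g ∘ Set.rangeFactorization h) = Set.range g := hσ.range_comp g
  have hmin_g : Nat.card (Set.range g) ≤ Nat.card (Set.range h) →
      Nat.card (Set.range h) ≤ Nat.card (Set.range g) :=
    hrange ▸ hmin ((isHom_mapDB p D _ _).1 hg)
  exact Function.injective_of_card_le_card_range (hmin_g (Finite.card_range_le g))
end

section
/- A Boolean conjunctive query q is equivalent to some Boolean conjunctive query of tree width at most k (k ≥ 1) if and only if the core of q has tree width at most k, where tree width of a CQ is the tree width of the Gaifman graph of its canonical database. -/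
/-- The Gaifman graph of a database: constants are vertices, with an edge between two
distinct constants occurring together in a fact. -/
def gaifman {A R C : Type} (D : DB A R C) : SimpleGraph C where
  Adj x y := x ≠ y ∧ ∃ r, (r, x, y) ∈ D.bin ∨ (r, y, x) ∈ D.bin
  symm := by
    constructor
    rintro x y ⟨hxy, r, h⟩
    exact ⟨hxy.symm, r, h.symm⟩
  loopless := by
    constructor
    rintro x ⟨hxx, -⟩
    exact hxx rfl

def TreewidthLE {V : Type} (G : SimpleGraph V) (k : ℕ) : Prop :=
  ∃ (T : Type) (TG : SimpleGraph T) (μ : T → Finset V),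
    TG.IsTree ∧
    (∀ v, ∃ t, v ∈ μ t) ∧
    (∀ u v, G.Adj u v → ∃ t, u ∈ μ t ∧ v ∈ μ t) ∧
    (∀ v : V, (TG.induce {t | v ∈ μ t}).Connected) ∧
    (∀ t, (μ t).card ≤ k + 1)

/-- The subquery of `q` induced on the variable set `S`. -/
def restrictDB {A R C : Type} (D : DB A R C) (S : Set C) : DB A R C where
  un := {p | p ∈ D.un ∧ p.2 ∈ S}
  bin := {p | p ∈ D.bin ∧ p.2.1 ∈ S ∧ p.2.2 ∈ S}

/-- Two Boolean CQs are equivalent if every database satisfies one iff it satisfies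
the other. -/
def CQEquiv {A R V1 V2 : Type} (q1 : DB A R V1) (q2 : DB A R V2) : Prop :=
  ∀ (C : Type) (D : DB A R C), (∃ h, isHom q1 D h) ↔ (∃ h, isHom q2 D h)

/-- `S` induces a core of `q`: the induced subquery is equivalent to `q` and no proper
induced subquery of it is equivalent to it. -/
def IsCore {A R V : Type} (q : DB A R V) (S : Set V) : Prop :=
  CQEquiv q (restrictDB q S) ∧
  ∀ S' : Set V, S' ⊂ S → ¬ CQEquiv (restrictDB q S') (restrictDB q S)

/-! Let `q'` be equivalent to `q` with a tree decomposition of width `k`, and let `S` induce a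
core of `q`. Composing homomorphisms `q → q' → q → core` gives an endomorphism of the core, which
by minimality is onto `S`, hence injective on the finite set `S`. So a homomorphism `f : q → q'`
is injective on `S` and maps Gaifman edges of the core to Gaifman edges of `q'`, and pulling the
bags of `q'` back along `f` decomposes the Gaifman graph of the core on `S`. The variables outside
`S` are isolated in it; each gets a singleton bag, attached as a leaf to the decomposition tree. -/

namespace SimpleGraph

open Sum

lemma Connected.induce_image {V W : Type} {G : SimpleGraph V} {H : SimpleGraph W} (f : G →g H)
    {s : Set V} (hs : (G.induce s).Connected) : (H.induce (f '' s)).Connected :=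
  hs.map (⟨fun x => ⟨f x, x.1, x.2, rfl⟩, fun h => f.map_adj h⟩ : G.induce s →g H.induce (f '' s))
    (by rintro ⟨_, x, hx, rfl⟩; exact ⟨⟨x, hx⟩, rfl⟩)

variable {T : Type} (L : Type)

def addLeaves (TG : SimpleGraph T) (t₀ : T) : SimpleGraph (T ⊕ L) where
  Adj
    | inl a, inl b => TG.Adj a b
    | inl a, inr _ => a = t₀
    | inr _, inl b => b = t₀
    | inr _, inr _ => False
  symm := by
    constructor
    rintro (a | l) (b | l') h
    exacts [h.symm, h, h, h]
  loopless := by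
    constructor
    rintro (a | l) h
    exacts [TG.loopless.irrefl a h, h]

variable {L} {TG : SimpleGraph T} {t₀ : T}

def addLeavesInl : TG →g addLeaves L TG t₀ where
  toFun := inl
  map_rel' h := h

lemma deleteEdges_addLeaves (a b : T) :
    (addLeaves L TG t₀).deleteEdges {s(inl a, inl b)} =
      addLeaves L (TG.deleteEdges {s(a, b)}) t₀ := by
  ext (c | l) (d | l') <;> simp [addLeaves]

/-- Retracting every leaf onto `t₀` turns a walk of `addLeaves` into a walk of `TG`. -/
lemma Reachable.of_addLeaves {a b : T} (h : (addLeaves L TG t₀).Reachable (inl a) (inl b)) :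
    TG.Reachable a b := by
  rw [reachable_iff_reflTransGen] at h ⊢
  refine h.lift' (Sum.elim id fun _ => t₀) ?_
  rintro (c | l) (d | l') hadj
  · exact .single hadj
  · subst hadj; exact .refl
  · subst hadj; exact .refl
  · exact hadj.elim

lemma not_reachable_deleteEdges_addLeaves (l : L) :
    ¬ ((addLeaves L TG t₀).deleteEdges {s(inr l, inl t₀)}).Reachable (inr l) (inl t₀) := by
  rintro ⟨p⟩
  cases p with
  | @cons _ w _ hadj _ =>
    rw [deleteEdges_adj] at hadj
    rcases w with c | l'
    · obtain ⟨rfl, hne⟩ := hadj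
      exact hne rfl
    · exact hadj.1

lemma isTree_addLeaves (hT : TG.IsTree) : (addLeaves L TG t₀).IsTree := by
  refine ⟨?_, ?_⟩
  · have hreach (x : T ⊕ L) : (addLeaves L TG t₀).Reachable x (inl t₀) := by
      rcases x with a | l
      · exact (hT.connected.preconnected a t₀).map addLeavesInl
      · exact (show (addLeaves L TG t₀).Adj (inr l) (inl t₀) from rfl).reachable
    have : Nonempty (T ⊕ L) := ⟨inl t₀⟩
    exact ⟨fun x y => (hreach x).trans (hreach y).symm⟩
  · rw [isAcyclic_iff_forall_adj_isBridge]
    rintro (a | l) (b | l') hadj <;> rw [isBridge_iff]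
    · rw [deleteEdges_addLeaves]
      exact fun h => isAcyclic_iff_forall_adj_isBridge.1 hT.isAcyclic hadj h.of_addLeaves
    · obtain rfl : a = t₀ := hadj
      rw [Sym2.eq_swap]
      exact fun h => not_reachable_deleteEdges_addLeaves l' h.symm
    · obtain rfl : b = t₀ := hadj
      exact not_reachable_deleteEdges_addLeaves l
    · exact hadj.elim

end SimpleGraph

section TreeDecompositions

open SimpleGraph

variable {V W : Type} {k : ℕ}

lemma TreewidthLE.comap {G : SimpleGraph V} {H : SimpleGraph W} (f : G →g H)
    (hf : Function.Injective f) (hH : TreewidthLE H k) : TreewidthLE G k := by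
  obtain ⟨T, TG, μ, htree, hcover, hedge, hconn, hcard⟩ := hH
  refine ⟨T, TG, fun t => (μ t).preimage f hf.injOn, htree, fun v => ?_, fun u v huv => ?_,
    fun v => ?_, fun t => ?_⟩
  · simpa using hcover (f v)
  · simpa using hedge _ _ (f.map_adj huv)
  · have hbags : {t | v ∈ (μ t).preimage f hf.injOn} = {t | f v ∈ μ t} := by simp
    exact hbags ▸ hconn (f v)
  · exact (Finset.card_le_card_of_injOn f (fun v hv => by simpa using hv) hf.injOn).trans
      (hcard t)

lemma TreewidthLE.of_induce {G : SimpleGraph V} {S : Set V} (hS : ∀ u v, G.Adj u v → u ∈ S)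
    (h : TreewidthLE (G.induce S) k) : TreewidthLE G k := by
  obtain ⟨T, TG, μ, htree, hcover, hedge, hconn, hcard⟩ := h
  let bag : T ⊕ {v // v ∉ S} → Finset V :=
    Sum.elim (fun t => (μ t).map (Function.Embedding.subtype _)) (fun l => {l.1})
  have hbags_mem (v : V) (hv : v ∈ S) : {x | v ∈ bag x} = Sum.inl '' {t | ⟨v, hv⟩ ∈ μ t} := by
    ext (t | ⟨w, hw⟩)
    · simp [bag, hv]
    · simp [bag, ne_of_mem_of_not_mem hv hw]
  have hbags_not_mem (v : V) (hv : v ∉ S) : {x | v ∈ bag x} = {Sum.inr ⟨v, hv⟩} := by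
    ext (t | l) <;> simp [bag, hv, Subtype.ext_iff, eq_comm]
  refine ⟨_, addLeaves _ TG htree.connected.nonempty.some, bag, isTree_addLeaves htree,
    fun v => ?_, fun u v huv => ?_, fun v => ?_, ?_⟩
  · by_cases hv : v ∈ S
    · obtain ⟨t, ht⟩ := hcover ⟨v, hv⟩
      exact ⟨.inl t, Finset.mem_map_of_mem _ ht⟩
    · exact ⟨.inr ⟨v, hv⟩, Finset.mem_singleton_self v⟩
  · obtain ⟨t, hu, hv⟩ := hedge ⟨u, hS u v huv⟩ ⟨v, hS v u huv.symm⟩ huv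
    exact ⟨.inl t, Finset.mem_map_of_mem _ hu, Finset.mem_map_of_mem _ hv⟩
  · by_cases hv : v ∈ S
    · rw [hbags_mem v hv]
      exact (hconn ⟨v, hv⟩).induce_image addLeavesInl
    · rw [hbags_not_mem v hv, induce_singleton_eq_top]
      exact connected_top
  · rintro (t | l)
    · simpa [bag] using hcard t
    · simp [bag]

end TreeDecompositions

section Homomorphisms

variable {A R : Type}

lemma isHom_id {C : Type} (D : DB A R C) : isHom D D id :=
  ⟨fun _ _ h => h, fun _ _ _ h => h⟩

lemma isHom.comp {C₁ C₂ C₃ : Type} {D₁ : DB A R C₁} {D₂ : DB A R C₂} {D₃ : DB A R C₃}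
    {f : C₁ → C₂} {g : C₂ → C₃} (hg : isHom D₂ D₃ g) (hf : isHom D₁ D₂ f) :
    isHom D₁ D₃ (g ∘ f) :=
  ⟨fun a c h => hg.1 a (f c) (hf.1 a c h), fun r c d h => hg.2 r (f c) (f d) (hf.2 r c d h)⟩

lemma isHom.restrictDB {C C' : Type} {q : DB A R C} {D : DB A R C'} {f : C → C'}
    (hf : isHom q D f) (S : Set C) : isHom (restrictDB q S) D f :=
  ⟨fun a c hc => hf.1 a c hc.1, fun r c d hd => hf.2 r c d hd.1⟩

lemma isHom_restrictDB_of_subset {C : Type} (q : DB A R C) {S T : Set C} (hST : S ⊆ T) :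
    isHom (restrictDB q S) (restrictDB q T) id :=
  ⟨fun _ _ hc => ⟨hc.1, hST hc.2⟩, fun _ _ _ hd => ⟨hd.1, hST hd.2.1, hST hd.2.2⟩⟩

lemma isHom.gaifman_adj {C C' : Type} {D : DB A R C} {D' : DB A R C'} {f : C → C'}
    (hf : isHom D D' f) {u v : C} (huv : (gaifman D).Adj u v) (hne : f u ≠ f v) :
    (gaifman D').Adj (f u) (f v) := by
  obtain ⟨-, r, h | h⟩ := huv
  exacts [⟨hne, r, .inl (hf.2 r u v h)⟩, ⟨hne, r, .inr (hf.2 r v u h)⟩]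

lemma cqEquiv_iff_exists_isHom {V₁ V₂ : Type} {q₁ : DB A R V₁} {q₂ : DB A R V₂} :
    CQEquiv q₁ q₂ ↔ (∃ f, isHom q₁ q₂ f) ∧ (∃ g, isHom q₂ q₁ g) := by
  refine ⟨fun h => ⟨(h _ q₂).2 ⟨id, isHom_id q₂⟩, (h _ q₁).1 ⟨id, isHom_id q₁⟩⟩, ?_⟩
  rintro ⟨⟨f, hf⟩, ⟨g, hg⟩⟩ C D
  exact ⟨fun ⟨h, hh⟩ => ⟨h ∘ g, hh.comp hg⟩, fun ⟨h, hh⟩ => ⟨h ∘ f, hh.comp hf⟩⟩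

lemma CQEquiv.symm {V₁ V₂ : Type} {q₁ : DB A R V₁} {q₂ : DB A R V₂} (h : CQEquiv q₁ q₂) :
    CQEquiv q₂ q₁ :=
  fun C D => (h C D).symm

lemma CQEquiv.trans {V₁ V₂ V₃ : Type} {q₁ : DB A R V₁} {q₂ : DB A R V₂} {q₃ : DB A R V₃}
    (h₁₂ : CQEquiv q₁ q₂) (h₂₃ : CQEquiv q₂ q₃) : CQEquiv q₁ q₃ :=
  fun C D => (h₁₂ C D).trans (h₂₃ C D)

end Homomorphisms

section Cores

variable {A R V : Type}

lemma exists_isCore [Finite V] (q : DB A R V) : ∃ S, IsCore q S := by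
  obtain ⟨S, hS, hmin⟩ := exists_minimal_of_wellFoundedLT (fun S => CQEquiv q (restrictDB q S))
    ⟨Set.univ, cqEquiv_iff_exists_isHom.2
      ⟨⟨id, fun _ _ h => ⟨h, trivial⟩, fun _ _ _ h => ⟨h, trivial, trivial⟩⟩,
        ⟨id, (isHom_id q).restrictDB _⟩⟩⟩
  exact ⟨S, hS, fun S' hS'S hequiv => hS'S.2 (hmin (hS.trans hequiv.symm) hS'S.1)⟩

/-- Otherwise the core would be equivalent to its proper subquery induced on `S ∩ e '' S`. -/
lemma IsCore.subset_image {q : DB A R V} {S : Set V} (hS : IsCore q S) {e : V → V}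
    (he : isHom (restrictDB q S) (restrictDB q S) e) : S ⊆ e '' S := by
  by_contra hsub
  have heS : isHom (restrictDB q S) (restrictDB q (S ∩ e '' S)) e :=
    ⟨fun a c hc => ⟨(he.1 a c hc).1, (he.1 a c hc).2, c, hc.2, rfl⟩,
      fun r c d hd => ⟨(he.2 r c d hd).1, ⟨(he.2 r c d hd).2.1, c, hd.2.1, rfl⟩,
        (he.2 r c d hd).2.2, d, hd.2.2, rfl⟩⟩
  refine hS.2 _ ⟨Set.inter_subset_left, fun h => hsub fun v hv => (h hv).2⟩ ?_
  exact cqEquiv_iff_exists_isHom.2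
    ⟨⟨id, isHom_restrictDB_of_subset q Set.inter_subset_left⟩, ⟨e, heS⟩⟩

lemma IsCore.injOn_of_isHom [Finite V] {V' : Type} {q : DB A R V} {q' : DB A R V'} {S : Set V}
    (hS : IsCore q S) {f : V → V'} (hf : isHom q q' f) {g : V' → V} (hg : isHom q' q g) :
    Set.InjOn f S := by
  obtain ⟨h, hh⟩ := (cqEquiv_iff_exists_isHom.1 hS.1).1
  have hsub := hS.subset_image ((hh.comp hg |>.comp hf).restrictDB S)
  have hcard : ((h ∘ g ∘ f) '' S).ncard = S.ncard :=
    le_antisymm (Set.ncard_image_le S.toFinite) (Set.ncard_le_ncard hsub (S.toFinite.image _))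
  exact (Set.injOn_of_ncard_image_eq hcard).of_comp.of_comp

end Cores

theorem stmt14_general {A R V : Type} [Finite V] (q : DB A R V) (k : ℕ) :
    (∃ (V' : Type) (_ : Finite V') (q' : DB A R V'),
        CQEquiv q q' ∧ TreewidthLE (gaifman q') k) ↔
    (∃ S : Set V, IsCore q S ∧ TreewidthLE (gaifman (restrictDB q S)) k) := by
  refine ⟨fun ⟨V', _, q', hequiv, htw⟩ => ?_, fun ⟨S, hS, htw⟩ => ⟨V, inferInstance, _, hS.1, htw⟩⟩
  obtain ⟨S, hS⟩ := exists_isCore q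
  obtain ⟨⟨f, hf⟩, ⟨g, hg⟩⟩ := cqEquiv_iff_exists_isHom.1 hequiv
  have hinj : Set.InjOn f S := hS.injOn_of_isHom hf hg
  let φ : (gaifman (restrictDB q S)).induce S →g gaifman q' :=
    ⟨fun v => f v, fun {u v} huv => (hf.restrictDB S).gaifman_adj huv (hinj.ne u.2 v.2 huv.1)⟩
  have hφ : Function.Injective φ := fun u v huv => Subtype.ext (hinj u.2 v.2 huv)
  refine ⟨S, hS, (htw.comap φ hφ).of_induce ?_⟩
  rintro u v ⟨-, r, h | h⟩
  exacts [h.2.1, h.2.2]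

/-- A Boolean CQ `q` is equivalent to some Boolean CQ of tree width at most `k`
(`k ≥ 1`) iff the core of `q` has tree width at most `k`, tree width of a CQ being
that of the Gaifman graph of its canonical database. -/
theorem stmt14 {A R V : Type} [Finite V] (q : DB A R V) (k : ℕ) (hk : 1 ≤ k) :
    (∃ (V' : Type) (_ : Finite V') (q' : DB A R V'),
        CQEquiv q q' ∧ TreewidthLE (gaifman q') k) ↔
    (∃ S : Set V, IsCore q S ∧ TreewidthLE (gaifman (restrictDB q S)) k) :=
  stmt14_general q k
end
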